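/- arXiv:1107.0300 — 2 statements merged into one kernel-verified Lean document; each statement's English description precedes it below -/
import Mathlib

section
/- Let α ≠ 0 be a real number, σ > 0, and define f(t) = ∑_{k ∈ ℤ} exp(−(t + kα)²/(2σ²)) for t ∈ ℝ. Then f attains its maximum exactly on the lattice αℤ: f(t) ≤ f(0) for all t ∈ ℝ, and f(t) = f(s) whenever t − s ∈ αℤ; consequently, for y, β ∈ ℝ with β ≠ 0, the function λ ↦ ∑_{k ∈ ℤ} exp(−(y − βλ + kα)²/(2σ²)) on ℝ attains its maximum at every λ ∈ (α/β)ℤ + y/β. -/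
/-!
Poisson summation gives `∑ₙ exp (-π a (n + x)²) = a^(-1/2) ∑ₙ exp (-π n² / a) e^(2π i n x)`
for `a > 0`. All Fourier coefficients on the right are positive, so the triangle inequality
bounds the sum by its value at `x = 0`. The function `f` of the theorem is this sum with
`a = α² / (2πσ²)` and `x = t / α`, and summing over all translates by `αℤ` makes it
`α`-periodic; the likelihood in `λ` is `f (y - βλ)`, and `y - βλ ∈ αℤ` on the given lattice.
-/

open Complex Real

theorem summable_exp_neg_pi_mul_int_sq {a : ℝ} (ha : 0 < a) :
    Summable fun n : ℤ => rexp (-π * a * (n : ℝ) ^ 2) := by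
  refine (HurwitzKernelBounds.summable_f_int 0 0 ha).congr fun n => ?_
  simp only [HurwitzKernelBounds.f_int, pow_zero, one_mul, add_zero]
  ring_nf

theorem tsum_exp_neg_pi_mul_int_add_sq {a : ℝ} (ha : 0 < a) (x : ℝ) :
    ((∑' n : ℤ, rexp (-π * a * (n + x) ^ 2) : ℝ) : ℂ) =
      1 / (a : ℂ) ^ (1 / 2 : ℂ) * ∑' n : ℤ, cexp (-π / a * n ^ 2 + 2 * π * x * n * I) := by
  -- With `b = -a x`, completing the square puts a factor `exp (π a x²)` on both sides.
  have hpoisson := Complex.tsum_exp_neg_quadratic (a := a) (by simpa using ha) (-(a * x))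
  have hshift : ∀ n : ℤ, cexp (-π * a * n ^ 2 + 2 * π * (-(a * x) : ℂ) * n) =
      ((rexp (-π * a * (n + x) ^ 2) : ℝ) : ℂ) * cexp (π * a * x ^ 2) := by
    intro n
    push_cast
    rw [← Complex.exp_add]
    ring_nf
  have hdual : ∀ n : ℤ, cexp (-π / a * (n + I * (-(a * x) : ℂ)) ^ 2) =
      cexp (-π / a * n ^ 2 + 2 * π * x * n * I) * cexp (π * a * x ^ 2) := by
    intro n
    have ha' : (a : ℂ) ≠ 0 := by exact_mod_cast ha.ne'
    rw [← Complex.exp_add]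
    congr 1
    field_simp
    ring_nf
    rw [Complex.I_sq]
    ring
  simp_rw [hshift, hdual, tsum_mul_right, ← mul_assoc] at hpoisson
  rw [Complex.ofReal_tsum]
  exact mul_right_cancel₀ (Complex.exp_ne_zero _) hpoisson

theorem tsum_exp_neg_pi_mul_int_add_sq_le {a : ℝ} (ha : 0 < a) (x : ℝ) :
    ∑' n : ℤ, rexp (-π * a * (n + x) ^ 2) ≤ ∑' n : ℤ, rexp (-π * a * (n : ℝ) ^ 2) := by
  have hnorm : ∀ n : ℤ, ‖cexp (-π / a * n ^ 2 + 2 * π * x * n * I)‖ = rexp (-π * a⁻¹ * n ^ 2) := by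
    intro n
    rw [Complex.norm_exp, show -π / a * n ^ 2 + 2 * π * x * n * I =
      ((-π * a⁻¹ * n ^ 2 : ℝ) : ℂ) + ((2 * π * x * n : ℝ) : ℂ) * I by push_cast; ring]
    simp only [Complex.add_re, Complex.ofReal_re, Complex.mul_I_re, Complex.ofReal_im, neg_zero,
      add_zero]
  have hsqrt : ‖1 / (a : ℂ) ^ (1 / 2 : ℂ)‖ = 1 / a ^ (1 / 2 : ℝ) := by
    rw [← Complex.ofReal_one, ← Complex.ofReal_ofNat, ← Complex.ofReal_div,
      ← Complex.ofReal_cpow ha.le, ← Complex.ofReal_div, Complex.norm_real,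
      Real.norm_of_nonneg (by positivity)]
  have hsum : Summable fun n : ℤ => ‖cexp (-π / a * n ^ 2 + 2 * π * x * n * I)‖ := by
    simpa only [hnorm] using summable_exp_neg_pi_mul_int_sq (inv_pos.mpr ha)
  calc ∑' n : ℤ, rexp (-π * a * (n + x) ^ 2)
      = ‖((∑' n : ℤ, rexp (-π * a * (n + x) ^ 2) : ℝ) : ℂ)‖ := by
        rw [Complex.norm_real, Real.norm_of_nonneg (tsum_nonneg fun _ => (Real.exp_pos _).le)]
    _ ≤ 1 / a ^ (1 / 2 : ℝ) * ∑' n : ℤ, rexp (-π * a⁻¹ * n ^ 2) := by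
        rw [tsum_exp_neg_pi_mul_int_add_sq ha, norm_mul, hsqrt, ← tsum_congr hnorm]
        gcongr
        exact norm_tsum_le_tsum_norm hsum
    _ = ∑' n : ℤ, rexp (-π * a * (n : ℝ) ^ 2) := by
        simp_rw [Real.tsum_exp_neg_mul_int_sq ha, div_eq_mul_inv]

theorem periodic_tsum_int_mul_add {M : Type*} [AddCommMonoid M] [TopologicalSpace M]
    (g : ℝ → M) (α : ℝ) : Function.Periodic (fun t => ∑' k : ℤ, g (t + k * α)) α := fun t => by
  simpa only [Equiv.coe_addRight, Int.cast_add, Int.cast_one, add_mul, one_mul,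
    add_right_comm _ α, add_assoc] using (Equiv.addRight (1 : ℤ)).tsum_eq fun k : ℤ => g (t + k * α)

/-- for `α ≠ 0`, `σ > 0` and `f(t) = ∑_{k∈ℤ} exp(−(t + kα)²/(2σ²))`,
`f` attains its maximum on the lattice `αℤ`: `f(t) ≤ f(0)` for all `t`, and
`f(t) = f(s)` whenever `t − s ∈ αℤ`; consequently, for `β ≠ 0`, the likelihood
`λ ↦ ∑_{k∈ℤ} exp(−(y − βλ + kα)²/(2σ²))` attains its maximum at every
`λ ∈ (α/β)ℤ + y/β`. -/
theorem periodized_gaussian_max_on_lattice (α σ : ℝ) (hα : α ≠ 0) (hσ : 0 < σ) :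
    let f : ℝ → ℝ := fun t => ∑' k : ℤ, Real.exp (-(t + k * α) ^ 2 / (2 * σ ^ 2))
    (∀ t : ℝ, f t ≤ f 0) ∧
    (∀ t s : ℝ, (∃ k : ℤ, t - s = k * α) → f t = f s) ∧
    (∀ y β : ℝ, β ≠ 0 → ∀ lam : ℝ, (∃ m : ℤ, lam = m * (α / β) + y / β) →
      ∀ lam' : ℝ,
        (∑' k : ℤ, Real.exp (-(y - β * lam' + k * α) ^ 2 / (2 * σ ^ 2))) ≤
          ∑' k : ℤ, Real.exp (-(y - β * lam + k * α) ^ 2 / (2 * σ ^ 2))) := by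
  intro f
  set a := α ^ 2 / (2 * π * σ ^ 2) with ha_def
  have ha : 0 < a := by positivity
  have hf : ∀ t, f t = ∑' k : ℤ, rexp (-π * a * (k + t / α) ^ 2) := fun t =>
    tsum_congr fun k => by rw [ha_def]; congr 1; field_simp; ring
  have hmax : ∀ t, f t ≤ f 0 := fun t => by
    simpa only [hf, zero_div, add_zero] using tsum_exp_neg_pi_mul_int_add_sq_le ha (t / α)
  have hper : ∀ t s, (∃ k : ℤ, t - s = k * α) → f t = f s := by
    rintro t s ⟨k, hk⟩
    rw [sub_eq_iff_eq_add'.mp hk]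
    exact (periodic_tsum_int_mul_add (fun u => rexp (-u ^ 2 / (2 * σ ^ 2))) α).int_mul k s
  refine ⟨hmax, hper, ?_⟩
  rintro y β hβ lam ⟨m, rfl⟩ lam'
  have hlattice : f (y - β * (m * (α / β) + y / β)) = f 0 :=
    hper _ _ ⟨-m, by field_simp; push_cast; ring⟩
  change f _ ≤ f _
  rw [hlattice]
  exact hmax _
end

section
/- Let α ≠ 0 be a real number, σ > 0, and define f(t) = ∑_{k ∈ ℤ} exp(−(t + kα)²/(2σ²)) for t ∈ ℝ. Then f is even and |α|-periodic, and f is monotone nonincreasing in the distance to the lattice αℤ: for all real s, t with 0 ≤ s ≤ t ≤ |α|/2, one has f(s) ≥ f(t). -/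
/-!
Write `c = 2σ²` and `a = |α|`; evenness and periodicity are reindexings of the sum over `ℤ`.
Monotonicity on `[0, a/2]` is proved in two regimes.

If `a² ≥ 12 c` the Gaussians are well separated. On `[a/4, a/2]` pair the terms symmetric about
`a/2`: each pair is antitone because `x ↦ x e^{-x²/c}` decreases beyond `√(c/2)`. On `[0, a/4]`
pair the terms symmetric about `0`: each pair may increase, but by at most a summable share of the
decrease of the central term `e^{-u²/c}`.

If `a² ≤ 12 c`, Poisson summation gives `f(u) = √(πc)/a · ∑ₙ e^{-Pn²} cos(2πnu/a)` with
`P = π²c/a² ≥ log 2`. Now the first harmonic dominates, because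
`|cos nθ₁ - cos nθ₂| ≤ n² (cos θ₁ - cos θ₂)` for `0 ≤ θ₁ ≤ θ₂ ≤ π`.
-/

open Real Set

lemma HasSum.nat_add_one_add_neg_add_one {M : Type*} [AddCommGroup M] [TopologicalSpace M]
    [IsTopologicalAddGroup M] {f : ℤ → M} {m : M} (hf : HasSum f m) :
    HasSum (fun n : ℕ => f (n + 1) + f (-(n + 1))) (m - f 0) := by
  have := (hasSum_nat_add_iff' 1).2 hf.nat_add_neg
  simp only [Finset.range_one, Finset.sum_singleton, Nat.cast_zero, neg_zero] at this
  convert this using 1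
  · ext n; push_cast; rfl
  · abel

lemma antitoneOn_tsum {ι α : Type*} [Preorder α] {F : ι → α → ℝ} {s : Set α}
    (hF : ∀ i, AntitoneOn (F i) s) (hs : ∀ x ∈ s, Summable fun i => F i x) :
    AntitoneOn (fun x => ∑' i, F i x) s := fun _ hx _ hy hxy =>
  (hs _ hy).tsum_le_tsum (fun i => hF i hx hy hxy) (hs _ hx)

lemma antitoneOn_mul_add_tsum {ι α : Type*} [Preorder α] {g : α → ℝ} {F : ι → α → ℝ}
    {β : ι → ℝ} {C : ℝ} {s : Set α} (hg : AntitoneOn g s)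
    (hF : ∀ i, AntitoneOn (fun x => F i x + β i * g x) s)
    (hFs : ∀ x ∈ s, Summable fun i => F i x) (hβ : Summable β) (hβC : ∑' i, β i ≤ C) :
    AntitoneOn (fun x => C * g x + ∑' i, F i x) s := by
  have key : ∀ x ∈ s, C * g x + ∑' i, F i x =
      (C - ∑' i, β i) * g x + ∑' i, (F i x + β i * g x) := by
    intro x hx
    rw [(hFs x hx).tsum_add (hβ.mul_right _), tsum_mul_right]
    ring
  have hrest := antitoneOn_tsum hF fun x hx => (hFs x hx).add (hβ.mul_right (g x))
  intro x hx y hy hxy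
  dsimp only
  rw [key x hx, key y hy]
  exact add_le_add (mul_le_mul_of_nonneg_left (hg hx hy hxy) (sub_nonneg.2 hβC))
    (hrest hx hy hxy)

lemma antitoneOn_Icc_of_hasDerivAt_nonpos {f f' : ℝ → ℝ} {a b : ℝ}
    (hf : ∀ x, HasDerivAt f (f' x) x) (hf' : ∀ x ∈ Ioo a b, f' x ≤ 0) :
    AntitoneOn f (Icc a b) :=
  antitoneOn_of_hasDerivWithinAt_nonpos (convex_Icc a b)
    (fun x _ => (hf x).continuousAt.continuousWithinAt) (fun x _ => (hf x).hasDerivWithinAt)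
    (by simpa only [interior_Icc] using hf')

lemma sq_add_one_le_four_pow (n : ℕ) : ((n : ℝ) + 1) ^ 2 ≤ 4 ^ n := by
  have h : (n : ℝ) + 1 ≤ 2 ^ n := by exact_mod_cast Nat.lt_two_pow_self
  calc ((n : ℝ) + 1) ^ 2 ≤ (2 ^ n) ^ 2 := by gcongr
    _ = 4 ^ n := by rw [← pow_mul, mul_comm, pow_mul]; norm_num

lemma summable_and_tsum_le_of_le_geometric {f : ℕ → ℝ} {C r : ℝ} (hf0 : ∀ n, 0 ≤ f n)
    (hf : ∀ n, f n ≤ C * r ^ n) (hr0 : 0 ≤ r) (hr : r < 1) :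
    Summable f ∧ ∑' n, f n ≤ C * (1 - r)⁻¹ := by
  have hgeom := (summable_geometric_of_lt_one hr0 hr).mul_left C
  have hsum := Summable.of_nonneg_of_le hf0 hf hgeom
  refine ⟨hsum, (hsum.tsum_le_tsum hf hgeom).trans_eq ?_⟩
  rw [tsum_mul_left, tsum_geometric_of_lt_one hr0 hr]

noncomputable def gaussian (c x : ℝ) : ℝ := rexp (-x ^ 2 / c)

noncomputable def periodizedGaussian (a c t : ℝ) : ℝ := ∑' n : ℤ, gaussian c (t + n * a)

section Gaussian

variable {c : ℝ}

lemma gaussian_pos (c x : ℝ) : 0 < gaussian c x := exp_pos _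

@[simp] lemma gaussian_neg (c x : ℝ) : gaussian c (-x) = gaussian c x := by
  simp [gaussian]

lemma antitoneOn_gaussian (hc : 0 < c) : AntitoneOn (gaussian c) (Ici 0) := by
  intro x hx y _ hxy
  unfold gaussian
  gcongr

lemma hasDerivAt_gaussian (c x : ℝ) :
    HasDerivAt (gaussian c) (-(2 / c) * (x * gaussian c x)) x := by
  have h : HasDerivAt (fun y => -y ^ 2 / c) (-(2 * x) / c) x := by
    simpa using ((hasDerivAt_pow 2 x).neg.div_const c)
  exact h.exp.congr_deriv (by unfold gaussian; ring)

lemma summable_gaussian_add_int_mul (hc : 0 < c) {a : ℝ} (ha : a ≠ 0) (u : ℝ) :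
    Summable fun n : ℤ => gaussian c (u + n * a) := by
  refine .of_nonneg_of_le (fun n => (gaussian_pos c _).le) (fun n => ?_)
    (summable_pow_mul_jacobiTheta₂_term_bound (|u * a| / (π * c)) (T := a ^ 2 / (π * c))
      (by positivity) 0)
  rw [pow_zero, one_mul, gaussian, exp_le_exp, Int.cast_abs]
  have h : |u * a| * |(n : ℝ)| = |u * a * n| := (abs_mul _ _).symm
  have : -π * (a ^ 2 / (π * c) * n ^ 2 - 2 * (|u * a| / (π * c)) * |(n : ℝ)|) =
      (2 * |u * a * n| - (n * a) ^ 2) / c := by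
    rw [← h]; field_simp; ring
  rw [this, div_le_div_iff_of_pos_right hc]
  nlinarith [neg_abs_le (u * a * n), sq_nonneg u]

lemma antitoneOn_mul_gaussian (hc : 0 < c) :
    AntitoneOn (fun x => x * gaussian c x) (Ici √(c / 2)) := by
  intro A hA B hB hAB
  simp only [mem_Ici] at hA
  have hsq : c / 2 ≤ A ^ 2 := by
    rw [← Real.sq_sqrt (by positivity : 0 ≤ c / 2)]
    gcongr
  have hA0 : 0 < A := lt_of_lt_of_le (by positivity) hA
  have hcA : c ≤ A * (A + B) := by nlinarith
  have hBA : B - A ≤ A * (B ^ 2 - A ^ 2) / c := by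
    rw [le_div_iff₀ hc]
    nlinarith [mul_le_mul_of_nonneg_left hcA (sub_nonneg.2 hAB)]
  have hB : B ≤ A * rexp ((B ^ 2 - A ^ 2) / c) := by
    have := add_one_le_exp ((B ^ 2 - A ^ 2) / c)
    have : A * ((B ^ 2 - A ^ 2) / c + 1) ≤ A * rexp ((B ^ 2 - A ^ 2) / c) := by gcongr
    rw [mul_add, mul_one, ← mul_div_assoc] at this
    linarith
  calc B * gaussian c B ≤ A * rexp ((B ^ 2 - A ^ 2) / c) * gaussian c B := by
        gcongr; exact (gaussian_pos c B).le
    _ = A * gaussian c A := by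
        rw [mul_assoc, gaussian, gaussian, ← exp_add]
        ring_nf

lemma sub_mul_gaussian_sub_le (hc : 0 < c) {a K u : ℝ} (hK : a ≤ K) (hu0 : 0 ≤ u)
    (hu : u ≤ a / 4) :
    (K - u) * gaussian c (K - u) - (K + u) * gaussian c (K + u) ≤
      4 * K ^ 2 / c * rexp (-(K * a) / (2 * c)) * (u * gaussian c u) := by
  have hK0 : 0 ≤ K := by linarith
  set X := gaussian c (K - u) with hX_def
  set Y := gaussian c (K + u) with hY_def
  have hX0 : 0 < X := gaussian_pos c _
  have hY0 : 0 < Y := gaussian_pos c _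
  have hY : Y = X * rexp (-(4 * K * u / c)) := by
    rw [hX_def, hY_def, gaussian, gaussian, ← exp_add]
    congr 1
    field_simp
    ring
  have hXY : X - Y ≤ X * (4 * K * u / c) := by
    rw [hY]
    nlinarith [add_one_le_exp (-(4 * K * u / c))]
  have hX : X ≤ rexp (-(K * a) / (2 * c)) * gaussian c u := by
    have h : K * a + 2 * u ^ 2 ≤ 2 * (K - u) ^ 2 := by nlinarith
    rw [hX_def, gaussian, gaussian, ← exp_add, exp_le_exp,
      show -(K * a) / (2 * c) + -u ^ 2 / c = -(K * a + 2 * u ^ 2) / (2 * c) by field_simp; ring,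
      show -(K - u) ^ 2 / c = -(2 * (K - u) ^ 2) / (2 * c) by field_simp]
    gcongr
  calc (K - u) * X - (K + u) * Y ≤ K * (X - Y) := by nlinarith
    _ ≤ K * (X * (4 * K * u / c)) := by gcongr
    _ = 4 * K ^ 2 / c * u * X := by ring
    _ ≤ 4 * K ^ 2 / c * u * (rexp (-(K * a) / (2 * c)) * gaussian c u) := by gcongr
    _ = _ := by ring

end Gaussian

section PeriodizedGaussian

variable {a c : ℝ}

lemma periodizedGaussian_neg (a c t : ℝ) :
    periodizedGaussian a c (-t) = periodizedGaussian a c t := by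
  rw [periodizedGaussian, ← (Equiv.neg ℤ).tsum_eq]
  refine tsum_congr fun n => ?_
  rw [← gaussian_neg]
  push_cast [Equiv.neg_apply]
  ring_nf

lemma periodizedGaussian_add_period (a c t : ℝ) :
    periodizedGaussian a c (t + a) = periodizedGaussian a c t := by
  rw [periodizedGaussian, periodizedGaussian]
  conv_rhs => rw [← (Equiv.addRight (1 : ℤ)).tsum_eq]
  refine tsum_congr fun n => ?_
  push_cast [Equiv.coe_addRight]
  ring_nf

lemma periodizedGaussian_abs (a c : ℝ) : periodizedGaussian |a| c = periodizedGaussian a c := by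
  rcases abs_cases a with ⟨h, -⟩ | ⟨h, -⟩
  · rw [h]
  · ext t
    rw [h, periodizedGaussian, ← (Equiv.neg ℤ).tsum_eq]
    refine tsum_congr fun n => ?_
    push_cast [Equiv.neg_apply]
    ring_nf

lemma hasSum_gaussian_pairs_about_half (hc : 0 < c) (ha : a ≠ 0) (u : ℝ) :
    HasSum (fun k : ℕ => gaussian c (u + k * a) + gaussian c (u - (k + 1) * a))
      (periodizedGaussian a c u) := by
  refine (summable_gaussian_add_int_mul hc ha u).hasSum.nat_add_neg_add_one.congr_fun
    fun k => ?_
  push_cast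
  congr 2
  ring

lemma hasSum_gaussian_pairs_about_zero (hc : 0 < c) (ha : a ≠ 0) (u : ℝ) :
    HasSum (fun k : ℕ => gaussian c (u + (k + 1) * a) + gaussian c (u - (k + 1) * a))
      (periodizedGaussian a c u - gaussian c u) := by
  have h := (summable_gaussian_add_int_mul hc ha u).hasSum.nat_add_one_add_neg_add_one
  rw [Int.cast_zero, zero_mul, add_zero] at h
  refine h.congr_fun fun k => ?_
  push_cast
  congr 2
  ring

end PeriodizedGaussian

section Direct

variable {a c : ℝ}

lemma antitoneOn_gaussian_pair_about_half (hc : 0 < c) (h8 : 8 * c ≤ a ^ 2) (k : ℕ) :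
    AntitoneOn (fun u => gaussian c (u + k * a) + gaussian c (u - (k + 1) * a))
      (Icc (a / 4) (a / 2)) := by
  refine antitoneOn_Icc_of_hasDerivAt_nonpos (fun u =>
    ((hasDerivAt_gaussian c _).comp_add_const u _).add
      ((hasDerivAt_gaussian c _).comp_sub_const u _)) fun u hu => ?_
  have hk : (0 : ℝ) ≤ k := k.cast_nonneg
  have ha : 0 < a := by nlinarith [hu.1, hu.2]
  have hsqrt : √(c / 2) ≤ a / 4 := Real.sqrt_le_iff.2 ⟨by positivity, by nlinarith⟩
  have hA : u + k * a ∈ Ici √(c / 2) := by simp only [mem_Ici]; nlinarith [hu.1]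
  have hAB : u + k * a ≤ (k + 1) * a - u := by nlinarith [hu.2]
  have := antitoneOn_mul_gaussian hc hA (hA.trans hAB) hAB
  rw [show u - (k + 1) * a = -((k + 1) * a - u) by ring, gaussian_neg]
  have : 0 ≤ 2 / c := by positivity
  nlinarith

lemma antitoneOn_periodizedGaussian_Icc_quarter_half (hc : 0 < c) (ha : 0 < a)
    (h8 : 8 * c ≤ a ^ 2) : AntitoneOn (periodizedGaussian a c) (Icc (a / 4) (a / 2)) := by
  have h := hasSum_gaussian_pairs_about_half hc ha.ne'
  rw [show periodizedGaussian a c = _ from funext fun u => (h u).tsum_eq.symm]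
  exact antitoneOn_tsum (antitoneOn_gaussian_pair_about_half hc h8) fun u _ => (h u).summable

lemma antitoneOn_gaussian_pair_about_zero_add (hc : 0 < c) {K : ℝ} (hK : a ≤ K) :
    AntitoneOn (fun u => gaussian c (u + K) + gaussian c (u - K) +
      4 * K ^ 2 / c * rexp (-(K * a) / (2 * c)) * gaussian c u) (Icc 0 (a / 4)) := by
  refine antitoneOn_Icc_of_hasDerivAt_nonpos (fun u =>
    (((hasDerivAt_gaussian c _).comp_add_const u _).add
      ((hasDerivAt_gaussian c _).comp_sub_const u _)).add
      ((hasDerivAt_gaussian c u).const_mul _)) fun u hu => ?_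
  have := sub_mul_gaussian_sub_le hc hK hu.1.le hu.2.le
  rw [show u - K = -(K - u) by ring, gaussian_neg, add_comm u K]
  have : 0 ≤ 2 / c := by positivity
  nlinarith

lemma four_mul_add_one_mul_exp_le_one {ρ : ℝ} (hρ : 12 ≤ ρ) :
    4 * (ρ + 1) * rexp (-(ρ / 2)) ≤ 1 := by
  have h := Real.pow_div_factorial_le_exp (ρ / 2) (by positivity) 4
  norm_num [Nat.factorial] at h
  have h4 : 4 * (ρ + 1) ≤ rexp (ρ / 2) := by nlinarith [sq_nonneg (ρ - 12), sq_nonneg ρ]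
  calc 4 * (ρ + 1) * rexp (-(ρ / 2)) ≤ rexp (ρ / 2) * rexp (-(ρ / 2)) := by gcongr
    _ = 1 := by rw [← exp_add, add_neg_cancel, exp_zero]

lemma antitoneOn_periodizedGaussian_Icc_zero_quarter (hc : 0 < c) (ha : 0 < a)
    (h12 : 12 * c ≤ a ^ 2) : AntitoneOn (periodizedGaussian a c) (Icc 0 (a / 4)) := by
  set ρ := a ^ 2 / c
  set y := rexp (-(ρ / 2))
  have hρ : 12 ≤ ρ := by rw [le_div_iff₀ hc]; linarith
  have hy : 4 * (ρ + 1) * y ≤ 1 := four_mul_add_one_mul_exp_le_one hρ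
  have hy0 : 0 < y := exp_pos _
  have h4y : 4 * y < 1 := by nlinarith
  have hβ_le : ∀ k : ℕ, 4 * ((k + 1) * a) ^ 2 / c * rexp (-((k + 1) * a * a) / (2 * c)) ≤
      4 * ρ * y * (4 * y) ^ k := by
    intro k
    have hexp : rexp (-((k + 1) * a * a) / (2 * c)) = y ^ (k + 1) := by
      rw [← exp_nat_mul]; push_cast; congr 1; simp only [ρ]; field_simp
    calc 4 * ((k + 1) * a) ^ 2 / c * rexp (-((k + 1) * a * a) / (2 * c))
        = 4 * ρ * y * (((k : ℝ) + 1) ^ 2 * y ^ k) := by rw [hexp]; ring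
      _ ≤ 4 * ρ * y * (4 ^ k * y ^ k) := by gcongr; exact sq_add_one_le_four_pow k
      _ = 4 * ρ * y * (4 * y) ^ k := by rw [mul_pow]
  obtain ⟨hβ, hβ_sum⟩ := summable_and_tsum_le_of_le_geometric (fun k => by positivity) hβ_le
    (by positivity) h4y
  have h := hasSum_gaussian_pairs_about_zero hc ha.ne'
  rw [show periodizedGaussian a c = fun u => 1 * gaussian c u + ∑' k : ℕ,
      (gaussian c (u + (k + 1) * a) + gaussian c (u - (k + 1) * a)) from
    funext fun u => by rw [(h u).tsum_eq]; ring]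
  refine antitoneOn_mul_add_tsum ((antitoneOn_gaussian hc).mono Icc_subset_Ici_self)
    (fun k => antitoneOn_gaussian_pair_about_zero_add hc ?_) (fun u _ => (h u).summable) hβ
    (hβ_sum.trans ?_)
  · nlinarith [k.cast_nonneg (α := ℝ)]
  · rw [← div_eq_mul_inv, div_le_one (by linarith)]
    nlinarith

lemma antitoneOn_periodizedGaussian_of_twelve_mul_le_sq (hc : 0 < c) (ha : 0 < a)
    (h12 : 12 * c ≤ a ^ 2) : AntitoneOn (periodizedGaussian a c) (Icc 0 (a / 2)) := by
  have h0 : 0 ≤ a / 4 := by positivity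
  have h1 : a / 4 ≤ a / 2 := by linarith
  rw [← Icc_union_Icc_eq_Icc h0 h1]
  exact (antitoneOn_periodizedGaussian_Icc_zero_quarter hc ha h12).union_right
    (antitoneOn_periodizedGaussian_Icc_quarter_half hc ha (by linarith)) (isGreatest_Icc h0)
    (isLeast_Icc h1)

end Direct

noncomputable def thetaCos (P θ : ℝ) : ℝ := ∑' n : ℤ, rexp (-P * n ^ 2) * cos (n * θ)

section ThetaCos

variable {P : ℝ}

lemma abs_sin_nat_mul_le (n : ℕ) (x : ℝ) : |sin (n * x)| ≤ n * |sin x| := by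
  induction n with
  | zero => simp
  | succ n ih =>
    push_cast
    rw [add_mul, one_mul, sin_add]
    calc |sin (n * x) * cos x + cos (n * x) * sin x|
        ≤ |sin (n * x)| * |cos x| + |cos (n * x)| * |sin x| := by
          rw [← abs_mul, ← abs_mul]; exact abs_add_le _ _
      _ ≤ n * |sin x| * 1 + 1 * |sin x| := by
          gcongr
          · exact abs_cos_le_one x
          · exact abs_cos_le_one _
      _ = (n + 1) * |sin x| := by ring

lemma antitoneOn_cos_nat_mul_add (n : ℕ) :
    AntitoneOn (fun θ => cos (n * θ) + n ^ 2 * cos θ) (Icc 0 π) := by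
  intro θ₁ h₁ θ₂ h₂ h
  dsimp only
  set p := (θ₁ + θ₂) / 2 with hp_def
  set q := (θ₂ - θ₁) / 2 with hq_def
  have hcos : ∀ m : ℝ, cos (m * θ₁) - cos (m * θ₂) = 2 * sin (m * p) * sin (m * q) := by
    intro m
    rw [cos_sub_cos, show (m * θ₁ + m * θ₂) / 2 = m * p by ring,
      show (m * θ₁ - m * θ₂) / 2 = -(m * q) by ring, sin_neg]
    ring
  have hp : 0 ≤ sin p := sin_nonneg_of_nonneg_of_le_pi (by linarith [h₁.1, h₂.1])
    (by linarith [h₁.2, h₂.2])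
  have hq : 0 ≤ sin q := sin_nonneg_of_nonneg_of_le_pi (by linarith)
    (by linarith [h₁.1, h₂.2, pi_pos])
  have hn := hcos n
  have h1 := hcos 1
  simp only [one_mul] at h1
  have hprod : |sin (n * p) * sin (n * q)| ≤ n * sin p * (n * sin q) := by
    have hp' := abs_sin_nat_mul_le n p
    have hq' := abs_sin_nat_mul_le n q
    rw [abs_of_nonneg hp] at hp'
    rw [abs_of_nonneg hq] at hq'
    rw [abs_mul]
    exact mul_le_mul hp' hq' (abs_nonneg _) (by positivity)
  nlinarith [neg_abs_le (sin (n * p) * sin (n * q))]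

lemma summable_exp_neg_mul_int_sq (hP : 0 < P) : Summable fun n : ℤ => rexp (-P * n ^ 2) :=
  (summable_gaussian_add_int_mul (inv_pos.2 hP) one_ne_zero 0).congr fun n => by
    rw [gaussian, zero_add, mul_one, div_inv_eq_mul, neg_mul, neg_mul, mul_comm]

lemma thetaCos_eq (hP : 0 < P) (θ : ℝ) :
    thetaCos P θ = 1 + (2 * rexp (-P) * cos θ +
      ∑' m : ℕ, 2 * rexp (-P * (m + 2) ^ 2) * cos ((m + 2) * θ)) := by
  have hs : Summable fun n : ℤ => rexp (-P * n ^ 2) * cos (n * θ) :=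
    (summable_exp_neg_mul_int_sq hP).of_norm_bounded fun n => by
      rw [norm_mul, Real.norm_of_nonneg (exp_pos _).le]
      exact mul_le_of_le_one_right (exp_pos _).le (abs_cos_le_one _)
  have h' : HasSum (fun k : ℕ => 2 * rexp (-P * (k + 1) ^ 2) * cos ((k + 1) * θ))
      (thetaCos P θ - 1) := by
    have h := hs.hasSum.nat_add_one_add_neg_add_one
    rw [Int.cast_zero, zero_pow two_ne_zero, mul_zero, exp_zero, zero_mul, cos_zero, mul_one] at h
    refine h.congr_fun fun k => ?_
    push_cast
    rw [neg_sq, neg_mul _ θ, cos_neg]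
    ring
  rw [← sub_eq_iff_eq_add', ← h'.tsum_eq, h'.summable.tsum_eq_zero_add]
  push_cast
  ring_nf

lemma summable_and_tsum_exp_neg_mul_sq_le (hP : log 2 ≤ P) :
    (Summable fun m : ℕ => 2 * rexp (-P * (m + 2) ^ 2) * (m + 2) ^ 2) ∧
      ∑' m : ℕ, 2 * rexp (-P * (m + 2) ^ 2) * (m + 2) ^ 2 ≤ 2 * rexp (-P) := by
  set x := rexp (-P)
  have hx0 : 0 < x := exp_pos _
  have hx : x ≤ 1 / 2 := by
    rw [← inv_eq_one_div, ← exp_log (two_pos : (0 : ℝ) < 2), ← exp_neg]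
    exact exp_le_exp.2 (neg_le_neg hP)
  have hx3 : 8 * x ^ 3 ≤ 1 := by
    calc 8 * x ^ 3 ≤ 8 * (1 / 2) ^ 3 := by gcongr
      _ = 1 := by norm_num
  have hterm : ∀ m : ℕ, 2 * rexp (-P * (m + 2) ^ 2) * (m + 2) ^ 2 ≤
      8 * x ^ 4 * (4 * x ^ 3) ^ m := by
    intro m
    have hexp : rexp (-P * (m + 2) ^ 2) ≤ x ^ 4 * (x ^ 3) ^ m := by
      have : rexp (-P * (m + 2) ^ 2) = x ^ ((m + 2) ^ 2) := by
        rw [← exp_nat_mul]; push_cast; ring_nf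
      rw [this, ← pow_mul, ← pow_add]
      exact pow_le_pow_of_le_one hx0.le (by linarith) (by nlinarith)
    have hsq : ((m : ℝ) + 2) ^ 2 ≤ 4 * 4 ^ m :=
      calc ((m : ℝ) + 2) ^ 2 = (((m + 1 : ℕ) : ℝ) + 1) ^ 2 := by push_cast; ring
        _ ≤ 4 ^ (m + 1) := sq_add_one_le_four_pow _
        _ = 4 * 4 ^ m := by ring
    calc 2 * rexp (-P * (m + 2) ^ 2) * (m + 2) ^ 2
        ≤ 2 * (x ^ 4 * (x ^ 3) ^ m) * (4 * 4 ^ m) := by gcongr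
      _ = 8 * x ^ 4 * (4 * x ^ 3) ^ m := by rw [mul_pow]; ring
  obtain ⟨hβ, hβ_sum⟩ := summable_and_tsum_le_of_le_geometric (fun m => by positivity) hterm
    (by positivity) (by linarith)
  refine ⟨hβ, hβ_sum.trans ?_⟩
  rw [← div_eq_mul_inv, div_le_iff₀ (by linarith)]
  nlinarith [pow_pos hx0 3]

lemma antitoneOn_thetaCos (hP : log 2 ≤ P) : AntitoneOn (thetaCos P) (Icc 0 π) := by
  have hP0 : 0 < P := (log_pos one_lt_two).trans_le hP
  obtain ⟨hβ, hβ_sum⟩ := summable_and_tsum_exp_neg_mul_sq_le hP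
  have hF : ∀ m : ℕ, AntitoneOn (fun θ => 2 * rexp (-P * (m + 2) ^ 2) * cos ((m + 2) * θ) +
      2 * rexp (-P * (m + 2) ^ 2) * (m + 2) ^ 2 * cos θ) (Icc 0 π) := by
    intro m
    have := (monotone_mul_left_of_nonneg (by positivity : 0 ≤ 2 * rexp (-P * (m + 2) ^ 2)))
      |>.comp_antitoneOn (antitoneOn_cos_nat_mul_add (m + 2))
    push_cast at this
    convert this using 2 with θ
    simp only [Function.comp_apply]
    ring
  have hFs : ∀ θ ∈ Icc 0 π,
      Summable fun m : ℕ => 2 * rexp (-P * (m + 2) ^ 2) * cos ((m + 2) * θ) :=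
    fun θ _ => hβ.of_norm_bounded fun m => by
      have hm : (1 : ℝ) ≤ (m + 2) ^ 2 := by nlinarith [(m.cast_nonneg : (0 : ℝ) ≤ m)]
      rw [norm_mul, Real.norm_of_nonneg (by positivity)]
      exact mul_le_mul_of_nonneg_left ((abs_cos_le_one _).trans hm) (by positivity)
  have h := antitoneOn_mul_add_tsum antitoneOn_cos hF hFs hβ hβ_sum
  rw [show thetaCos P = _ from funext (thetaCos_eq hP0)]
  exact fun x hx y hy hxy => by simpa only [add_le_add_iff_left] using h hx hy hxy

end ThetaCos

open Complex in
lemma ofReal_periodizedGaussian_eq_sqrt_mul_tsum {a c : ℝ} (ha : 0 < a) (hc : 0 < c) (u : ℝ) :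
    (periodizedGaussian a c u : ℂ) = (√(π * c / a ^ 2) : ℝ) * ∑' n : ℤ,
      cexp (-π * (π * c / a ^ 2 : ℝ) * n ^ 2 + 2 * π * (-I * (u / a : ℝ)) * n) := by
  set A : ℝ := π * c / a ^ 2 with hA_def
  have hA : 0 < A := by positivity
  have hdual : ∀ n : ℤ, cexp (-π / A * (n + I * (-I * (u / a : ℝ))) ^ 2) =
      gaussian c (u + n * a) := by
    intro n
    have ha' : (a : ℂ) ≠ 0 := by exact_mod_cast ha.ne'
    have hc' : (c : ℂ) ≠ 0 := by exact_mod_cast hc.ne'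
    have hπ : (π : ℂ) ≠ 0 := by exact_mod_cast pi_ne_zero
    rw [← mul_assoc, mul_neg, I_mul_I, neg_neg, one_mul, gaussian, ofReal_exp, hA_def]
    congr 1
    push_cast
    field_simp
    ring
  have key := Complex.tsum_exp_neg_quadratic (a := A) (by rw [ofReal_re]; exact hA)
    (-I * (u / a : ℝ))
  simp_rw [hdual, ← ofReal_tsum] at key
  have hsqrt : ((√A : ℝ) : ℂ) = (A : ℂ) ^ (1 / 2 : ℂ) := by
    rw [Real.sqrt_eq_rpow, ofReal_cpow hA.le]
    norm_num
  rw [key, hsqrt, ← mul_assoc, mul_one_div_cancel, one_mul]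
  · rfl
  · exact (cpow_ne_zero_iff_of_exponent_ne_zero (by norm_num)).2 (by exact_mod_cast hA.ne')

open Complex in
lemma periodizedGaussian_eq_mul_thetaCos {a c : ℝ} (ha : 0 < a) (hc : 0 < c) (u : ℝ) :
    periodizedGaussian a c u =
      √(π * c) / a * thetaCos (π ^ 2 * c / a ^ 2) (2 * π * u / a) := by
  have hsum : Summable fun n : ℤ =>
      cexp (-π * (π * c / a ^ 2 : ℝ) * n ^ 2 + 2 * π * (-I * (u / a : ℝ)) * n) := by
    refine ((summable_jacobiTheta₂_term_iff (-(u / a : ℝ)) (I * (π * c / a ^ 2 : ℝ))).2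
      (by rw [I_mul_im, ofReal_re]; positivity)).congr fun n => ?_
    rw [jacobiTheta₂_term]
    congr 1
    ring_nf
    rw [I_sq]
    ring
  have hre : ∀ n : ℤ,
      (cexp (-π * (π * c / a ^ 2 : ℝ) * n ^ 2 + 2 * π * (-I * (u / a : ℝ)) * n)).re =
        rexp (-(π ^ 2 * c / a ^ 2) * n ^ 2) * Real.cos (n * (2 * π * u / a)) := by
    intro n
    rw [show -π * (π * c / a ^ 2 : ℝ) * n ^ 2 + 2 * π * (-I * (u / a : ℝ)) * n =
        ((-(π ^ 2 * c / a ^ 2) * n ^ 2 : ℝ) : ℂ) +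
          ((-(n * (2 * π * u / a)) : ℝ) : ℂ) * I by
      push_cast; ring]
    rw [exp_re, add_re, mul_I_re, ofReal_re, ofReal_im, add_im, mul_I_im, ofReal_im, ofReal_re]
    simp
  have h := congrArg re (ofReal_periodizedGaussian_eq_sqrt_mul_tsum ha hc u)
  rw [ofReal_re, re_ofReal_mul, re_tsum hsum] at h
  rw [h, thetaCos, tsum_congr hre, Real.sqrt_div' _ (sq_nonneg a), Real.sqrt_sq ha.le]

lemma antitoneOn_periodizedGaussian_of_sq_le_twelve_mul {a c : ℝ} (ha : 0 < a) (hc : 0 < c)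
    (h12 : a ^ 2 ≤ 12 * c) : AntitoneOn (periodizedGaussian a c) (Icc 0 (a / 2)) := by
  have hP : log 2 ≤ π ^ 2 * c / a ^ 2 := by
    rw [le_div_iff₀ (by positivity)]
    nlinarith [log_two_lt_d9, pi_gt_three, mul_pos hc pi_pos]
  intro s hs t ht hst
  rw [periodizedGaussian_eq_mul_thetaCos ha hc, periodizedGaussian_eq_mul_thetaCos ha hc]
  refine mul_le_mul_of_nonneg_left (antitoneOn_thetaCos hP ?_ ?_ ?_) (by positivity)
  · exact ⟨by have := hs.1; positivity, by rw [div_le_iff₀ ha]; nlinarith [hs.2, pi_pos]⟩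
  · exact ⟨by have := ht.1; positivity, by rw [div_le_iff₀ ha]; nlinarith [ht.2, pi_pos]⟩
  · gcongr

lemma antitoneOn_periodizedGaussian {a c : ℝ} (ha : 0 < a) (hc : 0 < c) :
    AntitoneOn (periodizedGaussian a c) (Icc 0 (a / 2)) := by
  rcases le_total (a ^ 2) (12 * c) with h | h
  · exact antitoneOn_periodizedGaussian_of_sq_le_twelve_mul ha hc h
  · exact antitoneOn_periodizedGaussian_of_twelve_mul_le_sq hc ha h

/-- for `α ≠ 0`, `σ > 0` and `f(t) = ∑_{k∈ℤ} exp(−(t + kα)²/(2σ²))`,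
`f` is even, `|α|`-periodic, and nonincreasing in the distance to the lattice `αℤ`:
for `0 ≤ s ≤ t ≤ |α|/2`, `f(s) ≥ f(t)`. -/
theorem periodized_gaussian_even_periodic_monotone (α σ : ℝ) (hα : α ≠ 0) (hσ : 0 < σ) :
    let f : ℝ → ℝ := fun t => ∑' k : ℤ, Real.exp (-(t + k * α) ^ 2 / (2 * σ ^ 2))
    (∀ t : ℝ, f (-t) = f t) ∧
    (∀ t : ℝ, f (t + |α|) = f t) ∧
    (∀ s t : ℝ, 0 ≤ s → s ≤ t → t ≤ |α| / 2 → f t ≤ f s) := by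
  intro f
  have hf : f = periodizedGaussian |α| (2 * σ ^ 2) := (periodizedGaussian_abs α _).symm
  rw [hf]
  refine ⟨periodizedGaussian_neg _ _, periodizedGaussian_add_period _ _,
    fun s t hs hst ht => ?_⟩
  exact antitoneOn_periodizedGaussian (abs_pos.2 hα) (by positivity) ⟨hs, hst.trans ht⟩
    ⟨hs.trans hst, ht⟩ hst
end
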